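/- The EM residual ρ = ‖(I_d − F M F')Y‖_F²/n + v·tr(F M F') with M = (F'F + vI_k)^{-1} equals ∑_{j=0}^k (1 − γ_j/(γ_j+v))² β_j + v ∑_{j=1}^k λ_j/(λ_j+v), where FF' = U diag(λ)U' with orthonormal U, γ_0 = 0, γ_j = λ_j for j ≥ 1, β_0 = ‖(I − UU')Y‖_F²/n, and β_j = ‖Y'u_j‖²/n for j ≥ 1. -/

import Mathlib

open Matrix

section Aux

variable {d k n : ℕ}

lemma aux_smul_conj (U : Matrix (Fin d) (Fin k) ℝ) (a : ℝ) (g : Fin k → ℝ) :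
    a • (U * Matrix.diagonal g * Uᵀ) = U * Matrix.diagonal (fun j => a * g j) * Uᵀ := by
  rw [show Matrix.diagonal (fun j => a * g j) = a • Matrix.diagonal g by
    rw [← Matrix.diagonal_smul]; rfl]
  rw [Matrix.mul_smul, Matrix.smul_mul]

lemma aux_add_conj (U : Matrix (Fin d) (Fin k) ℝ) (g h : Fin k → ℝ) :
    U * Matrix.diagonal g * Uᵀ + U * Matrix.diagonal h * Uᵀ
      = U * Matrix.diagonal (fun j => g j + h j) * Uᵀ := by
  rw [show Matrix.diagonal (fun j => g j + h j) = Matrix.diagonal g + Matrix.diagonal h by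
    rw [Matrix.diagonal_add]]
  rw [Matrix.mul_add, Matrix.add_mul]

lemma aux_conj (U : Matrix (Fin d) (Fin k) ℝ) (hU : Uᵀ * U = 1) (e f : Fin k → ℝ) :
    (U * Matrix.diagonal e * Uᵀ) * (U * Matrix.diagonal f * Uᵀ)
      = U * Matrix.diagonal (fun j => e j * f j) * Uᵀ := by
  have h : Uᵀ * (U * (Matrix.diagonal f * Uᵀ)) = Matrix.diagonal f * Uᵀ := by
    rw [← Matrix.mul_assoc, hU, Matrix.one_mul]
  calc (U * Matrix.diagonal e * Uᵀ) * (U * Matrix.diagonal f * Uᵀ)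
      = U * (Matrix.diagonal e * (Uᵀ * (U * (Matrix.diagonal f * Uᵀ)))) := by
        simp only [Matrix.mul_assoc]
    _ = U * (Matrix.diagonal e * (Matrix.diagonal f * Uᵀ)) := by rw [h]
    _ = U * ((Matrix.diagonal e * Matrix.diagonal f) * Uᵀ) := by rw [Matrix.mul_assoc]
    _ = U * Matrix.diagonal (fun j => e j * f j) * Uᵀ := by
        rw [Matrix.diagonal_mul_diagonal, Matrix.mul_assoc]

lemma aux_tr (Y : Matrix (Fin d) (Fin n) ℝ) (U : Matrix (Fin d) (Fin k) ℝ)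
    (e : Fin k → ℝ) :
    Matrix.trace (Yᵀ * (U * Matrix.diagonal e * Uᵀ * Y))
      = ∑ j, e j * ((Uᵀ * (Y * Yᵀ) * U) j j) := by
  have h1 : Yᵀ * (U * Matrix.diagonal e * Uᵀ * Y)
      = (Yᵀ * U) * (Matrix.diagonal e * (Uᵀ * Y)) := by
    simp only [Matrix.mul_assoc]
  have h2 : Uᵀ * (Y * Yᵀ) * U = Uᵀ * Y * (Yᵀ * U) := by simp only [Matrix.mul_assoc]
  rw [h1, Matrix.trace_mul_comm, h2]
  have h3 : Matrix.diagonal e * (Uᵀ * Y) * (Yᵀ * U)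
      = Matrix.diagonal e * (Uᵀ * Y * (Yᵀ * U)) := by simp only [Matrix.mul_assoc]
  rw [h3]
  simp [Matrix.trace, Matrix.diag, Matrix.diagonal_mul]

lemma aux_residual (Y : Matrix (Fin d) (Fin n) ℝ) (U : Matrix (Fin d) (Fin k) ℝ)
    (hU : Uᵀ * U = 1) (e : Fin k → ℝ) :
    Matrix.trace ((((1 : Matrix (Fin d) (Fin d) ℝ) - U * Matrix.diagonal e * Uᵀ) * Y)ᵀ *
      (((1 : Matrix (Fin d) (Fin d) ℝ) - U * Matrix.diagonal e * Uᵀ) * Y)) =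
    Matrix.trace (Yᵀ * Y)
      - ∑ j, (2 * e j - e j ^ 2) * ((Uᵀ * (Y * Yᵀ) * U) j j) := by
  set Q := U * Matrix.diagonal e * Uᵀ with hQ
  have hQt : Qᵀ = Q := by
    rw [hQ, Matrix.transpose_mul, Matrix.transpose_mul, Matrix.transpose_transpose,
      Matrix.diagonal_transpose, Matrix.mul_assoc]
  have expand : ((1 - Q) * Y)ᵀ * ((1 - Q) * Y)
      = Yᵀ * Y - Yᵀ * (Q * Y) - (Yᵀ * (Q * Y) - Yᵀ * (Q * (Q * Y))) := by
    rw [Matrix.transpose_mul, Matrix.transpose_sub, Matrix.transpose_one, hQt]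
    simp only [Matrix.sub_mul, Matrix.mul_sub, Matrix.one_mul, Matrix.mul_one,
      Matrix.mul_assoc]
  rw [expand]
  have hQQ : Q * (Q * Y) = U * Matrix.diagonal (fun j => e j * e j) * Uᵀ * Y := by
    rw [← Matrix.mul_assoc, hQ, aux_conj U hU e e]
  rw [hQQ]
  have t1 := aux_tr Y U e
  have t2 := aux_tr Y U (fun j => e j * e j)
  rw [Matrix.trace_sub, Matrix.trace_sub, Matrix.trace_sub, t1]
  rw [show Yᵀ * (U * Matrix.diagonal (fun j => e j * e j) * Uᵀ * Y)
      = Yᵀ * (U * Matrix.diagonal (fun j => e j * e j) * Uᵀ * Y) from rfl] at t2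
  rw [t2]
  rw [show (∑ j, (2 * e j - e j ^ 2) * ((Uᵀ * (Y * Yᵀ) * U) j j))
      = ∑ j, (e j * ((Uᵀ * (Y * Yᵀ) * U) j j) +
          (e j * ((Uᵀ * (Y * Yᵀ) * U) j j)
            - (e j * e j) * ((Uᵀ * (Y * Yᵀ) * U) j j))) from
    Finset.sum_congr rfl (fun j _ => by ring)]
  rw [Finset.sum_add_distrib, Finset.sum_sub_distrib]
  ring

end Aux

theorem em_residual_formula
    (d k n : ℕ) (hn : 0 < n)
    (Y : Matrix (Fin d) (Fin n) ℝ) (F U : Matrix (Fin d) (Fin k) ℝ)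
    (lam : Fin k → ℝ) (v : ℝ)
    (hU : Uᵀ * U = 1) (hlam : ∀ j, 0 < lam j) (hv : 0 < v)
    (hF : F * Fᵀ = U * Matrix.diagonal lam * Uᵀ) :
    let M : Matrix (Fin k) (Fin k) ℝ :=
      (Fᵀ * F + v • (1 : Matrix (Fin k) (Fin k) ℝ))⁻¹
    let P : Matrix (Fin d) (Fin d) ℝ := F * M * Fᵀ
    let β0 : ℝ :=
      Matrix.trace ((((1 : Matrix (Fin d) (Fin d) ℝ) - U * Uᵀ) * Y)ᵀ *
        (((1 : Matrix (Fin d) (Fin d) ℝ) - U * Uᵀ) * Y)) / n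
    let β : Fin k → ℝ := fun j => (∑ i : Fin n, ((Yᵀ * U) i j) ^ 2) / n
    Matrix.trace ((((1 : Matrix (Fin d) (Fin d) ℝ) - P) * Y)ᵀ *
        (((1 : Matrix (Fin d) (Fin d) ℝ) - P) * Y)) / n +
      v * Matrix.trace P =
      β0 + ∑ j : Fin k, (1 - lam j / (lam j + v)) ^ 2 * β j +
        v * ∑ j : Fin k, lam j / (lam j + v) := by
  intro M P β0 β
  have hvne : v ≠ 0 := hv.ne'
  have hlv : ∀ j, lam j + v ≠ 0 := fun j => (add_pos (hlam j) hv).ne'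
  set dd : Fin k → ℝ := fun j => lam j / (lam j + v) with hdd
  set CC : Fin k → ℝ := fun j => -(lam j) / (v * (lam j + v)) with hCC
  set A : Matrix (Fin k) (Fin k) ℝ := Fᵀ * F + v • 1 with hA
  set B : Matrix (Fin d) (Fin d) ℝ := F * Fᵀ + v • 1 with hB
  set W : Matrix (Fin d) (Fin d) ℝ := U * Matrix.diagonal CC * Uᵀ + v⁻¹ • 1 with hW
  -- A is invertible
  have hApd : A.PosDef := by
    have h1 : (Fᵀ * F).PosSemidef := by
      have h := Matrix.posSemidef_conjTranspose_mul_self F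
      have : Fᴴ = Fᵀ := rfl
      rwa [this] at h
    have h2 : ((v • (1 : Matrix (Fin k) (Fin k) ℝ))).PosDef := by
      rw [show (v • (1 : Matrix (Fin k) (Fin k) ℝ)) = Matrix.diagonal (fun _ => v) by
        ext i j; by_cases h : i = j <;> simp [Matrix.diagonal, Matrix.one_apply, h]]
      exact Matrix.PosDef.diagonal (fun _ => hv)
    exact Matrix.PosDef.posSemidef_add h1 h2
  have hAunit : IsUnit A.det := isUnit_iff_ne_zero.mpr hApd.det_pos.ne'
  -- explicit right inverse of B
  have hBW : B * W = 1 := by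
    rw [hB, hF, hW]
    rw [Matrix.add_mul, Matrix.mul_add, Matrix.mul_add, aux_conj U hU lam CC]
    simp only [Matrix.smul_mul, Matrix.mul_smul, Matrix.one_mul, Matrix.mul_one, smul_smul]
    rw [inv_mul_cancel₀ hvne, one_smul]
    rw [aux_smul_conj U v⁻¹ lam, aux_smul_conj U v CC]
    rw [← add_assoc, aux_add_conj, aux_add_conj]
    have hz : (fun j => lam j * CC j + v⁻¹ * lam j + v * CC j) = (fun _ => (0:ℝ)) := by
      funext j
      rw [hCC]
      field_simp [hvne, hlv j]
      ring
    rw [hz]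
    simp
  have hBinv : B⁻¹ = W := Matrix.inv_eq_right_inv hBW
  have hBunit : IsUnit B.det := Matrix.isUnit_det_of_right_inverse hBW
  have hpush : F * A = B * F := by
    rw [hA, hB, Matrix.mul_add, Matrix.add_mul, Matrix.mul_smul, Matrix.smul_mul,
      Matrix.mul_one, Matrix.one_mul, ← Matrix.mul_assoc]
  have hFA : F * A⁻¹ = W * F := by
    calc F * A⁻¹ = (B⁻¹ * B) * (F * A⁻¹) := by
          rw [Matrix.nonsing_inv_mul _ hBunit, Matrix.one_mul]
      _ = B⁻¹ * ((B * F) * A⁻¹) := by simp only [Matrix.mul_assoc]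
      _ = B⁻¹ * ((F * A) * A⁻¹) := by rw [hpush]
      _ = B⁻¹ * (F * (A * A⁻¹)) := by simp only [Matrix.mul_assoc]
      _ = B⁻¹ * F := by rw [Matrix.mul_nonsing_inv _ hAunit, Matrix.mul_one]
      _ = W * F := by rw [hBinv]
  have hP : P = U * Matrix.diagonal dd * Uᵀ := by
    show F * A⁻¹ * Fᵀ = _
    rw [hFA, Matrix.mul_assoc, hF, hW, Matrix.add_mul, aux_conj U hU CC lam,
      Matrix.smul_mul, Matrix.one_mul, aux_smul_conj U v⁻¹ lam, aux_add_conj]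
    rw [show (fun j => CC j * lam j + v⁻¹ * lam j) = dd from funext fun j => by
      rw [hCC, hdd]; field_simp [hvne, hlv j]; ring]
  -- diagonal entries of the Gram matrix
  set s : Fin k → ℝ := fun j => (Uᵀ * (Y * Yᵀ) * U) j j with hs
  have hβs : ∀ j, β j = s j / n := by
    intro j
    have h1 : Uᵀ * (Y * Yᵀ) * U = (Yᵀ * U)ᵀ * (Yᵀ * U) := by
      rw [Matrix.transpose_mul, Matrix.transpose_transpose]
      simp only [Matrix.mul_assoc]
    show (∑ i : Fin n, ((Yᵀ * U) i j) ^ 2) / n = _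
    rw [hs]
    congr 1
    rw [h1]
    simp only [Matrix.mul_apply, Matrix.transpose_apply]
    refine Finset.sum_congr rfl fun x _ => ?_
    rw [sq]
  have hβ0 : β0 = (Matrix.trace (Yᵀ * Y) - ∑ j, s j) / n := by
    show Matrix.trace ((((1 : Matrix (Fin d) (Fin d) ℝ) - U * Uᵀ) * Y)ᵀ *
        (((1 : Matrix (Fin d) (Fin d) ℝ) - U * Uᵀ) * Y)) / n = _
    have hone : U * Uᵀ = U * (Matrix.diagonal (fun _ => (1:ℝ)) : Matrix (Fin k) (Fin k) ℝ) * Uᵀ := by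
      rw [Matrix.diagonal_one, Matrix.mul_one]
    rw [hone, aux_residual Y U hU (fun _ => (1:ℝ))]
    rw [show (∑ j, (2 * (1:ℝ) - (1:ℝ) ^ 2) * ((Uᵀ * (Y * Yᵀ) * U) j j)) = ∑ j, s j from
      Finset.sum_congr rfl (fun j _ => by rw [hs]; norm_num)]
  have hmain : Matrix.trace ((((1 : Matrix (Fin d) (Fin d) ℝ) - P) * Y)ᵀ *
      (((1 : Matrix (Fin d) (Fin d) ℝ) - P) * Y))
      = Matrix.trace (Yᵀ * Y) - ∑ j, (2 * dd j - dd j ^ 2) * s j := by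
    rw [hP, aux_residual Y U hU dd]
  have htrP : Matrix.trace P = ∑ j, dd j := by
    rw [hP, Matrix.trace_mul_comm, ← Matrix.mul_assoc, hU, Matrix.one_mul,
      Matrix.trace_diagonal]
  rw [hmain, htrP, hβ0]
  rw [show (∑ j : Fin k, (1 - lam j / (lam j + v)) ^ 2 * β j)
      = ∑ j : Fin k, (1 - dd j) ^ 2 * (s j / (n:ℝ)) from
    Finset.sum_congr rfl (fun j _ => by rw [hβs j, hdd])]
  have hkey : ∑ j, (2 * dd j - dd j ^ 2) * s j
      = ∑ j, s j - ∑ j, ((1 - dd j) ^ 2 * s j) := by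
    rw [← Finset.sum_sub_distrib]
    exact Finset.sum_congr rfl (fun j _ => by ring)
  have hdiv : ∑ j : Fin k, (1 - dd j) ^ 2 * (s j / (n:ℝ))
      = (∑ j, (1 - dd j) ^ 2 * s j) / (n:ℝ) := by
    rw [Finset.sum_div]
    exact Finset.sum_congr rfl (fun j _ => by ring)
  rw [hdiv, hkey]
  ring
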